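/- arXiv:2512.03511 — 3 statements merged into one kernel-verified Lean document; each statement's English description precedes it below -/
import Mathlib

section
/- For real Clifford algebras of quadratic forms of signature (p,q), there is an isomorphism of ℤ/2-graded algebras C^{p,q} ⊗̂ C^{r,s} ≅ C^{p+r, q+s}. -/
open scoped TensorProduct

/-- The quadratic form of signature `(p,q)` on `ℝ^{p+q}`. -/
noncomputable def signatureForm (p q : ℕ) : QuadraticForm ℝ (Fin (p + q) → ℝ) :=
  QuadraticMap.weightedSumSquares ℝ (fun i : Fin (p + q) => if (i : ℕ) < p then (1 : ℝ) else -1)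

/-- Index reshuffling. -/
def sigIdx (p q r s : ℕ) : (Fin (p + q) ⊕ Fin (r + s)) ≃ Fin ((p + r) + (q + s)) :=
  (Equiv.sumCongr finSumFinEquiv.symm finSumFinEquiv.symm).trans <|
    (Equiv.sumSumSumComm (Fin p) (Fin q) (Fin r) (Fin s)).trans <|
      (Equiv.sumCongr finSumFinEquiv finSumFinEquiv).trans finSumFinEquiv

lemma sigIdx_inl (p q r s : ℕ) (i : Fin (p + q)) :
    ((sigIdx p q r s (Sum.inl i) : ℕ) < p + r) ↔ (i : ℕ) < p := by
  induction i using Fin.addCases with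
  | left i => simp [sigIdx, Equiv.sumSumSumComm]; all_goals omega
  | right i => simp [sigIdx, Equiv.sumSumSumComm]

lemma sigIdx_inr (p q r s : ℕ) (j : Fin (r + s)) :
    ((sigIdx p q r s (Sum.inr j) : ℕ) < p + r) ↔ (j : ℕ) < r := by
  induction j using Fin.addCases with
  | left j => simp [sigIdx, Equiv.sumSumSumComm]
  | right j => simp [sigIdx, Equiv.sumSumSumComm]

open QuadraticMap in
noncomputable def sigIso (p q r s : ℕ) :
    ((signatureForm p q).prod (signatureForm r s)).IsometryEquiv
      (signatureForm (p + r) (q + s)) where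
  toLinearEquiv := (LinearEquiv.sumArrowLequivProdArrow _ _ ℝ ℝ).symm.trans
      (LinearEquiv.funCongrLeft ℝ ℝ (sigIdx p q r s).symm)
  map_app' := by
    rintro ⟨m₁, m₂⟩
    show signatureForm (p + r) (q + s) (fun k => Sum.elim m₁ m₂ ((sigIdx p q r s).symm k)) = _
    rw [signatureForm, weightedSumSquares_apply, ← Equiv.sum_comp (sigIdx p q r s)]
    simp only [Equiv.symm_apply_apply]
    rw [Fintype.sum_sum_type]
    rw [QuadraticMap.prod_apply, signatureForm, signatureForm,
      weightedSumSquares_apply, weightedSumSquares_apply]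
    congr 1
    · exact Finset.sum_congr rfl fun i _ => by simp only [sigIdx_inl]; rfl
    · exact Finset.sum_congr rfl fun j _ => by simp only [sigIdx_inr]; rfl

/-- `C^{p,q} ⊗̂ C^{r,s} ≅ C^{p+r,q+s}` as `ℤ/2`-graded algebras. -/
theorem cliffordAlgebra_graded_tensor_signature (p q r s : ℕ) :
    Nonempty ((CliffordAlgebra.evenOdd (signatureForm p q) ᵍ⊗[ℝ]
        CliffordAlgebra.evenOdd (signatureForm r s)) ≃ₐ[ℝ]
      CliffordAlgebra (signatureForm (p + r) (q + s))) := by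
  exact ⟨((CliffordAlgebra.prodEquiv _ _).symm.trans
    (CliffordAlgebra.equivOfIsometry (sigIso p q r s)))⟩
end

section
/- Every ℤ/2-graded division algebra A = A₀ ⊕ A₁ over ℝ with A₀ ≅ ℝ and A₁ ≠ 0 is isomorphic as a graded algebra to either ℝ[e]/⟨e² = 1⟩ or ℝ[e]/⟨e² = -1⟩, with e of degree 1. -/
lemma aux_decomp {A : Type*} [Ring A] [Algebra ℝ A]
    (𝒜 : ZMod 2 → Submodule ℝ A) [GradedAlgebra 𝒜] (a : A) :
    a = (DirectSum.decompose 𝒜 a 0 : A) + (DirectSum.decompose 𝒜 a 1 : A) := by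
  classical
  conv_lhs => rw [← DirectSum.sum_support_decompose 𝒜 a]
  rw [Finset.sum_subset (Finset.subset_univ _)]
  · have huniv : (Finset.univ : Finset (ZMod 2)) = {0, 1} := by decide
    rw [huniv, Finset.sum_insert (by decide), Finset.sum_singleton]
  · intro i _ hi
    simpa using DFinsupp.notMem_support_iff.mp hi

/-- Every `ℤ/2`-graded division algebra over `ℝ` with `A₀ ≅ ℝ` and `A₁ ≠ 0` is
`ℝ[e]/⟨e² = 1⟩` or `ℝ[e]/⟨e² = -1⟩` with `e` of degree 1. -/
theorem graded_division_algebra_deg0_real {A : Type*} [Ring A] [Algebra ℝ A]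
    [FiniteDimensional ℝ A]
    (𝒜 : ZMod 2 → Submodule ℝ A) [GradedAlgebra 𝒜]
    (hdiv : ∀ (i : ZMod 2) (a : A), a ∈ 𝒜 i → a ≠ 0 → IsUnit a)
    (h0 : ∀ a ∈ 𝒜 0, ∃ r : ℝ, a = algebraMap ℝ A r)
    (h1 : 𝒜 1 ≠ ⊥) :
    ∃ e : A, e ∈ 𝒜 1 ∧ (e * e = 1 ∨ e * e = -1) ∧
      ∀ a : A, ∃ r s : ℝ, a = algebraMap ℝ A r + algebraMap ℝ A s * e := by
  have h11 : (1 + 1 : ZMod 2) = 0 := by decide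
  -- pick nonzero x in degree 1
  obtain ⟨x, hx1, hx0⟩ : ∃ x, x ∈ 𝒜 1 ∧ x ≠ 0 := by
    by_contra h
    push_neg at h
    exact h1 (by ext a; simp only [Submodule.mem_bot]; exact ⟨fun ha => by by_contra hne; exact hne (h a ha), fun ha => ha ▸ (𝒜 1).zero_mem⟩)
  have hxx : x * x ∈ 𝒜 0 := by
    have := SetLike.mul_mem_graded hx1 hx1
    rwa [h11] at this
  obtain ⟨r, hr⟩ := h0 _ hxx
  have hxunit : IsUnit x := hdiv 1 x hx1 hx0
  have hrne : r ≠ 0 := by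
    intro h
    apply hx0
    have : x * x = 0 := by rw [hr, h, map_zero]
    rcases hxunit with ⟨u, rfl⟩
    have := congrArg (fun y => (↑u⁻¹ : A) * y) this
    simp [← mul_assoc] at this
    exact this
  -- key lemma: given e with e*e = ±1, representation holds
  have key : ∀ e : A, e ∈ 𝒜 1 → (e * e = 1 ∨ e * e = -1) →
      ∀ a : A, ∃ r s : ℝ, a = algebraMap ℝ A r + algebraMap ℝ A s * e := by
    intro e he hee a
    obtain ⟨r0, hr0⟩ := h0 _ (DirectSum.decompose 𝒜 a 0).2
    have ha1e : (DirectSum.decompose 𝒜 a 1 : A) * e ∈ 𝒜 0 := by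
      have := SetLike.mul_mem_graded (DirectSum.decompose 𝒜 a 1).2 he
      rwa [h11] at this
    obtain ⟨s0, hs0⟩ := h0 _ ha1e
    have hmul : (DirectSum.decompose 𝒜 a 1 : A) * (e * e) = algebraMap ℝ A s0 * e := by
      rw [← mul_assoc, hs0]
    rcases hee with h | h
    · refine ⟨r0, s0, ?_⟩
      rw [h, mul_one] at hmul
      rw [aux_decomp 𝒜 a, hr0, hmul]
    · refine ⟨r0, -s0, ?_⟩
      rw [h, mul_neg_one] at hmul
      have : (DirectSum.decompose 𝒜 a 1 : A) = algebraMap ℝ A (-s0) * e := by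
        rw [map_neg, neg_mul, ← hmul, neg_neg]
      rw [aux_decomp 𝒜 a, hr0, this]
  rcases lt_or_gt_of_ne hrne with hneg | hpos
  · -- r < 0 : e = x / sqrt (-r), e*e = -1
    set c : ℝ := (Real.sqrt (-r))⁻¹
    refine ⟨c • x, Submodule.smul_mem _ _ hx1, ?_⟩
    have hee : (c • x) * (c • x) = -1 := by
      rw [smul_mul_smul_comm, hr, Algebra.smul_def, ← map_mul]
      have hs : Real.sqrt (-r) * Real.sqrt (-r) = -r := Real.mul_self_sqrt (by linarith)
      have hc : c * c * r = -1 := by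
        have h2 : c * c = (-r)⁻¹ := by rw [← mul_inv, hs]
        rw [h2, inv_neg, neg_mul, inv_mul_cancel₀ hrne]
      rw [hc]
      simp
    exact ⟨Or.inr hee, key _ (Submodule.smul_mem _ _ hx1) (Or.inr hee)⟩
  · set c : ℝ := (Real.sqrt r)⁻¹
    refine ⟨c • x, Submodule.smul_mem _ _ hx1, ?_⟩
    have hee : (c • x) * (c • x) = 1 := by
      rw [smul_mul_smul_comm, hr, Algebra.smul_def, ← map_mul]
      have hs : Real.sqrt r * Real.sqrt r = r := Real.mul_self_sqrt (by linarith)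
      have hc : c * c * r = 1 := by
        have h2 : c * c = r⁻¹ := by rw [← mul_inv, hs]
        rw [h2, inv_mul_cancel₀ hrne]
      rw [hc]
      simp
    exact ⟨Or.inl hee, key _ (Submodule.smul_mem _ _ hx1) (Or.inl hee)⟩
end

section
/- Every ℤ/2-graded division algebra A = A₀ ⊕ A₁ over ℝ with A₀ ≅ ℍ and A₁ ≠ 0 contains a degree-1 element e that commutes with all of A₀ and satisfies e² = 1 or e² = -1; hence A ≅ ℍ[e]/⟨e² = ±1⟩ as a graded algebra. -/
/-!
Pick a nonzero, hence invertible, `u` of degree 1. Conjugation by `u` preserves `A₀ = f(ℍ)`, so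
it induces an algebra endomorphism of `ℍ`, which is inner (Skolem–Noether for `ℍ`): there is a
unit `q` with `u f(x) u⁻¹ = f(q x q⁻¹)`. Then `e₀ = f(q)⁻¹ u` has degree 1 and centralises `f(ℍ)`;
so does `e₀²`, which lies in `f(ℍ)` and is therefore a nonzero real scalar `r`. Rescaling `e₀` by
`|r|^(-1/2)` gives `e² = ±1`, and `A₁ = A₀ e` since `e` is invertible.
-/

open Quaternion DirectSum

section GradedRing

variable {ι A σ : Type*} [DecidableEq ι] [Semiring A] [SetLike σ A] [AddSubmonoidClass σ A]
  (𝒜 : ι → σ)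

theorem SetLike.units_inv_mem_graded [AddGroup ι] [GradedRing 𝒜] {u : Aˣ} {i : ι}
    (hu : (u : A) ∈ 𝒜 i) : ((u⁻¹ : Aˣ) : A) ∈ 𝒜 (-i) := by
  have h : (u : A) * decompose 𝒜 (u⁻¹ : Aˣ) (-i) = 1 := by
    rw [← coe_decompose_mul_add_of_left_mem 𝒜 hu, u.mul_inv, add_neg_cancel,
      decompose_of_mem_same 𝒜 (SetLike.one_mem_graded 𝒜)]
  rw [Units.inv_eq_of_mul_eq_one_right h]
  exact SetLike.coe_mem _

theorem SetLike.units_conj_mem_graded [AddCommGroup ι] [GradedRing 𝒜] {u : Aˣ} {i j : ι}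
    {x : A} (hu : (u : A) ∈ 𝒜 i) (hx : x ∈ 𝒜 j) :
    (u : A) * x * ((u⁻¹ : Aˣ) : A) ∈ 𝒜 j := by
  simpa using SetLike.mul_mem_graded (SetLike.mul_mem_graded hu hx)
    (SetLike.units_inv_mem_graded 𝒜 hu)

end GradedRing

theorem exists_eq_add_mul_of_units_mem_one {A σ : Type*} [Semiring A] [SetLike σ A]
    [AddSubmonoidClass σ A] (𝒜 : ZMod 2 → σ) [GradedRing 𝒜] {e : Aˣ}
    (he : (e : A) ∈ 𝒜 1) (x : A) : ∃ a ∈ 𝒜 0, ∃ b ∈ 𝒜 0, x = a + b * e := by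
  induction x using DirectSum.Decomposition.inductionOn 𝒜 with
  | zero => exact ⟨0, zero_mem _, 0, zero_mem _, by simp⟩
  | @homogeneous i x =>
    obtain ⟨x, hx⟩ := x
    obtain rfl | rfl := (by decide : ∀ j : ZMod 2, j = 0 ∨ j = 1) i
    · exact ⟨x, hx, 0, zero_mem _, by simp⟩
    · refine ⟨0, zero_mem _, x * ((e⁻¹ : Aˣ) : A), ?_, by simp [mul_assoc]⟩
      have := SetLike.mul_mem_graded hx (SetLike.units_inv_mem_graded 𝒜 he)
      rwa [add_neg_cancel] at this
  | add x y hx hy =>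
    obtain ⟨a, ha, b, hb, rfl⟩ := hx
    obtain ⟨a', ha', b', hb', rfl⟩ := hy
    exact ⟨a + a', add_mem ha ha', b + b', add_mem hb hb', by rw [add_mul]; abel⟩

namespace Quaternion

section CommRing

variable (R : Type*) [CommRing R]

@[simps] def i : ℍ[R] := ⟨0, 1, 0, 0⟩
@[simps] def j : ℍ[R] := ⟨0, 0, 1, 0⟩

variable {R}

theorem i_mul_i : i R * i R = -1 := by
  ext <;> simp [re_mul, imI_mul, imJ_mul, imK_mul]

theorem j_mul_j : j R * j R = -1 := by
  ext <;> simp [re_mul, imI_mul, imJ_mul, imK_mul]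

theorem i_mul_j : i R * j R = -(j R * i R) := by
  ext <;> simp [re_mul, imI_mul, imJ_mul, imK_mul]

theorem j_mul_i : j R * i R = -(i R * j R) := by
  rw [i_mul_j, neg_neg]

theorem i_ne_zero [Nontrivial R] : i R ≠ 0 :=
  fun h => by simpa using congrArg QuaternionAlgebra.imI h

theorem j_ne_zero [Nontrivial R] : j R ≠ 0 :=
  fun h => by simpa using congrArg QuaternionAlgebra.imJ h

theorem semiconjBy_of_semiconjBy_i_j {A : Type*} [Ring A] [Algebra R A]
    {f g : ℍ[R] →ₐ[R] A} {u : Aˣ} (hi : SemiconjBy (u : A) (g (i R)) (f (i R)))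
    (hj : SemiconjBy (u : A) (g (j R)) (f (j R))) (x : ℍ[R]) :
    SemiconjBy (u : A) (g x) (f x) := by
  let conj := (MulSemiringAction.toAlgEquiv R A (ConjAct.toConjAct u)).toAlgHom
  have hconj : ∀ y, SemiconjBy (u : A) (g y) (f y) → conj (g y) = f y := fun y h => by
    simp [conj, ConjAct.units_smul_def, h.eq, mul_assoc]
  have := congrArg (· x) (Quaternion.hom_ext (f := conj.comp g) (hconj _ hi) (hconj _ hj))
  exact ((Units.mul_inv_eq_iff_eq_mul u).mp (by simpa [conj, ConjAct.units_smul_def] using this))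

theorem center_eq_bot [IsAddTorsionFree R] : Subalgebra.center R ℍ[R] = ⊥ := by
  refine le_antisymm (fun c hc => ?_) bot_le
  rw [Subalgebra.mem_center_iff] at hc
  have hi := Quaternion.ext_iff.mp (hc (i R))
  have hj := Quaternion.ext_iff.mp (hc (j R))
  simp [re_mul, imI_mul, imJ_mul, imK_mul] at hi hj
  have hI : c.imI = 0 := self_eq_neg.mp hj.2.symm
  have hJ : c.imJ = 0 := self_eq_neg.mp hi.2
  have hK : c.imK = 0 := self_eq_neg.mp hj.1
  exact Algebra.mem_bot.mpr ⟨c.re, by ext <;> simp [hI, hJ, hK]⟩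

theorem exists_algebraMap_eq_of_commute [IsAddTorsionFree R] {A : Type*} [Ring A] [Algebra R A]
    {f : ℍ[R] →ₐ[R] A} (hf : Function.Injective f) {a : A} (ha : a ∈ f.range)
    (hcomm : ∀ x, Commute a (f x)) : ∃ r : R, algebraMap R A r = a := by
  obtain ⟨c, rfl⟩ := f.mem_range.mp ha
  have hc : c ∈ Subalgebra.center R ℍ[R] := Subalgebra.mem_center_iff.mpr fun b =>
    hf (by rw [map_mul, map_mul]; exact (hcomm b).eq.symm)
  rw [center_eq_bot, Algebra.mem_bot] at hc
  obtain ⟨r, rfl⟩ := hc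
  exact ⟨r, (f.commutes r).symm⟩

end CommRing

variable {R : Type*} [Field R] [LinearOrder R] [IsStrictOrderedRing R]

theorem exists_ne_zero_semiconjBy_i_j {u v : ℍ[R]} (hu : u * u = -1) (hv : v * v = -1)
    (huv : u * v = -(v * u)) :
    ∃ q : ℍ[R], q ≠ 0 ∧ SemiconjBy q (i R) u ∧ SemiconjBy q (j R) v := by
  -- `u + i` intertwines `i` with `u` (or `j` does, if `u = -i`); correcting such a `p` by
  -- `v p j` then also intertwines `j` with `v`, and if that correction kills `p`, `p i` works.
  obtain ⟨p, hp0, hp⟩ : ∃ p : ℍ[R], p ≠ 0 ∧ SemiconjBy p (i R) u := by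
    by_cases h : u + i R = 0
    · refine ⟨j R, j_ne_zero, ?_⟩
      rw [eq_neg_of_add_eq_zero_left h, SemiconjBy, neg_mul, i_mul_j, neg_neg]
    · exact ⟨u + i R, h, by rw [SemiconjBy, mul_add, add_mul, hu, i_mul_i]; abel⟩
  by_cases hq : p - v * p * j R = 0
  · have hvp : v * p = -(p * j R) := by
      rw [← neg_eq_iff_eq_neg, ← mul_neg_one, ← j_mul_j, ← mul_assoc, ← sub_eq_zero.mp hq]
    refine ⟨p * i R, mul_ne_zero hp0 i_ne_zero, by rw [SemiconjBy, ← mul_assoc, hp.eq], ?_⟩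
    rw [SemiconjBy, ← mul_assoc, hvp, neg_mul, mul_assoc, mul_assoc, i_mul_j, mul_neg]
  · refine ⟨p - v * p * j R, hq, ?_, ?_⟩
    · have h1 : u * (v * p * j R) = -(v * p * i R * j R) := by
        rw [← mul_assoc, ← mul_assoc, huv, neg_mul, neg_mul, mul_assoc v u p, ← hp.eq,
          ← mul_assoc]
      rw [SemiconjBy, mul_sub, sub_mul, h1, ← hp.eq, mul_assoc (v * p) (j R) (i R), j_mul_i,
        mul_neg]
      simp only [mul_assoc]
    · rw [SemiconjBy, mul_sub, sub_mul, mul_assoc (v * p) (j R) (j R), j_mul_j, mul_neg_one,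
        mul_assoc v p, ← mul_assoc v v, hv, neg_one_mul]
      abel

theorem exists_units_semiconjBy (σ : ℍ[R] →ₐ[R] ℍ[R]) :
    ∃ q : ℍ[R]ˣ, ∀ x, SemiconjBy (q : ℍ[R]) x (σ x) := by
  obtain ⟨q, hq, hqi, hqj⟩ := exists_ne_zero_semiconjBy_i_j (u := σ (i R)) (v := σ (j R))
    (by rw [← map_mul, i_mul_i, map_neg, map_one])
    (by rw [← map_mul, j_mul_j, map_neg, map_one])
    (by rw [← map_mul, i_mul_j, map_neg, map_mul])
  exact ⟨Units.mk0 q hq, semiconjBy_of_semiconjBy_i_j (g := AlgHom.id R ℍ[R]) hqi hqj⟩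

theorem exists_commute_of_conj_mem_range {A : Type*} [Ring A] [Algebra R A]
    {f : ℍ[R] →ₐ[R] A} (hf : Function.Injective f) {u : Aˣ}
    (hu : ∀ x, (u : A) * f x * ↑u⁻¹ ∈ f.range) :
    ∃ q : ℍ[R]ˣ, ∀ x, Commute (f ↑q⁻¹ * u) (f x) := by
  let conj := (MulSemiringAction.toAlgEquiv R A (ConjAct.toConjAct u)).toAlgHom
  let σ : ℍ[R] →ₐ[R] ℍ[R] := (AlgEquiv.ofInjective f hf).symm.toAlgHom.comp
    ((conj.comp f).codRestrict f.range (by simpa [conj, ConjAct.units_smul_def] using hu))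
  have hσ (x : ℍ[R]) : SemiconjBy (u : A) (f x) (f (σ x)) := by
    have : f (σ x) = u * f x * ↑u⁻¹ :=
      congrArg Subtype.val ((AlgEquiv.ofInjective f hf).apply_symm_apply ⟨_, hu x⟩)
    rw [SemiconjBy, this, Units.inv_mul_cancel_right]
  obtain ⟨q, hq⟩ := exists_units_semiconjBy σ
  exact ⟨q, fun x => (((hq x).units_inv_symm_left).map f).mul_left (hσ x)⟩

end Quaternion

theorem exists_smul_mul_self_eq_one_or_neg_one {A : Type*} [Ring A] [Algebra ℝ A] {e : A}
    {r : ℝ} (hr : r ≠ 0) (he : e * e = algebraMap ℝ A r) :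
    ∃ t : ℝ, t • e * (t • e) = 1 ∨ t • e * (t • e) = -1 := by
  refine ⟨(√|r|)⁻¹, ?_⟩
  have h : (√|r|)⁻¹ • e * ((√|r|)⁻¹ • e) = (|r|⁻¹ * r) • (1 : A) := by
    rw [smul_mul_smul_comm, he, Algebra.algebraMap_eq_smul_one, smul_smul, ← mul_inv,
      Real.mul_self_sqrt (abs_nonneg r)]
  rcases hr.lt_or_gt with hneg | hpos
  · right
    rw [h, abs_of_neg hneg, inv_neg, neg_mul, inv_mul_cancel₀ hr, neg_one_smul]
  · left
    rw [h, abs_of_pos hpos, inv_mul_cancel₀ hr, one_smul]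

theorem graded_division_algebra_deg0_quaternion_general {A : Type*} [Ring A] [Algebra ℝ A]
    (𝒜 : ZMod 2 → Submodule ℝ A) [GradedAlgebra 𝒜]
    (hdiv : ∀ (i : ZMod 2) (a : A), a ∈ 𝒜 i → a ≠ 0 → IsUnit a)
    (f : ℍ[ℝ] →ₐ[ℝ] A) (hf : Function.Injective f)
    (h0 : Subalgebra.toSubmodule f.range = 𝒜 0)
    (h1 : 𝒜 1 ≠ ⊥) :
    ∃ e : A, e ∈ 𝒜 1 ∧ (∀ a ∈ 𝒜 0, e * a = a * e) ∧ (e * e = 1 ∨ e * e = -1) ∧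
      ∀ x : A, ∃ q q' : ℍ[ℝ], x = f q + f q' * e := by
  have : Nontrivial A := hf.nontrivial
  have hrange (a : A) : a ∈ 𝒜 0 ↔ a ∈ f.range := by rw [← h0]; rfl
  obtain ⟨u, hu1, hu0⟩ := (Submodule.ne_bot_iff _).mp h1
  obtain ⟨U, rfl⟩ := hdiv 1 u hu1 hu0
  obtain ⟨q, hq⟩ := Quaternion.exists_commute_of_conj_mem_range hf fun x =>
    (hrange _).1 (SetLike.units_conj_mem_graded 𝒜 hu1 ((hrange _).2 ⟨x, rfl⟩))
  set e₀ := f ↑q⁻¹ * ↑U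
  have he₀ : e₀ ∈ 𝒜 1 := by
    simpa using SetLike.mul_mem_graded ((hrange _).2 ⟨_, rfl⟩) hu1
  have he₀_unit : IsUnit e₀ := ((q⁻¹).isUnit.map f).mul U.isUnit
  obtain ⟨r, hr⟩ := Quaternion.exists_algebraMap_eq_of_commute hf
    ((hrange _).1 (SetLike.mul_mem_graded he₀ he₀)) fun x => (hq x).mul_left (hq x)
  have hr0 : r ≠ 0 := by
    rintro rfl
    exact (he₀_unit.mul he₀_unit).ne_zero (by simpa using hr.symm)
  obtain ⟨t, ht⟩ := exists_smul_mul_self_eq_one_or_neg_one hr0 hr.symm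
  have he : t • e₀ ∈ 𝒜 1 := Submodule.smul_mem _ t he₀
  have he_unit : IsUnit (t • e₀) :=
    hdiv 1 _ he fun h => by rcases ht with h' | h' <;> simp [h] at h'
  refine ⟨t • e₀, he, fun a ha => ?_, ht, fun x => ?_⟩
  · obtain ⟨y, rfl⟩ := f.mem_range.mp ((hrange a).1 ha)
    exact ((hq y).smul_left t).eq
  · obtain ⟨a, ha, b, hb, rfl⟩ :=
      exists_eq_add_mul_of_units_mem_one 𝒜 (e := he_unit.unit) he x
    obtain ⟨q, rfl⟩ := f.mem_range.mp ((hrange a).1 ha)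
    obtain ⟨q', rfl⟩ := f.mem_range.mp ((hrange b).1 hb)
    exact ⟨q, q', rfl⟩

/-- Every `ℤ/2`-graded division algebra over `ℝ` with `A₀ ≅ ℍ` and `A₁ ≠ 0` contains a
degree-1 element `e` commuting with all of `A₀` with `e² = ±1`; hence `A ≅ ℍ[e]/⟨e² = ±1⟩`. -/
theorem graded_division_algebra_deg0_quaternion {A : Type*} [Ring A] [Algebra ℝ A]
    [FiniteDimensional ℝ A]
    (𝒜 : ZMod 2 → Submodule ℝ A) [GradedAlgebra 𝒜]
    (hdiv : ∀ (i : ZMod 2) (a : A), a ∈ 𝒜 i → a ≠ 0 → IsUnit a)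
    (f : ℍ[ℝ] →ₐ[ℝ] A) (hf : Function.Injective f)
    (h0 : Subalgebra.toSubmodule f.range = 𝒜 0)
    (h1 : 𝒜 1 ≠ ⊥) :
    ∃ e : A, e ∈ 𝒜 1 ∧ (∀ a ∈ 𝒜 0, e * a = a * e) ∧ (e * e = 1 ∨ e * e = -1) ∧
      ∀ x : A, ∃ q q' : ℍ[ℝ], x = f q + f q' * e :=
  graded_division_algebra_deg0_quaternion_general 𝒜 hdiv f hf h0 h1
end
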